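/- Let ξ be an Aristotelian Killing vector on M (L_ξ ν = 0 and L_ξ h̃ = 0), ξ̂ its complete lift to T*M, and H_f a free Hamiltonian, i.e. H_f(x,p) = G(ν^μ(x) p_μ, p_μ h̃^{μν}(x) p_ν) for some smooth function G of two variables. Then dH_f(ξ̂) = 0, i.e. ξ̂ is tangent to every level set of H_f, and the Poisson bracket {H_f, p_μ ξ^μ} vanishes. -/

import Mathlib

/-- Coordinate partial derivative on `ℝ^ι`. -/
noncomputable def pd {ι : Type*} [Fintype ι] [DecidableEq ι]
    (f : (ι → ℝ) → ℝ) (μ : ι) (x : ι → ℝ) : ℝ :=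
  fderiv ℝ f x (Pi.single μ 1)

/-- Base-point projection of a phase-space point. -/
def baseOf {n : ℕ} (z : (Fin n ⊕ Fin n) → ℝ) : Fin n → ℝ := fun μ => z (Sum.inl μ)

/-- Complete (cotangent) lift `ξ̂ = ξ^μ ∂/∂x^μ - p_α (∂ξ^α/∂x^μ) ∂/∂p_μ`. -/
noncomputable def lift {n : ℕ} (ξ : (Fin n → ℝ) → Fin n → ℝ)
    (z : (Fin n ⊕ Fin n) → ℝ) : (Fin n ⊕ Fin n) → ℝ
  | Sum.inl μ => ξ (baseOf z) μ
  | Sum.inr μ => - ∑ α, z (Sum.inr α) * pd (fun y => ξ y α) μ (baseOf z)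

/-- Poisson bracket `{F,G} = (∂F/∂p_μ)(∂G/∂x^μ) - (∂G/∂p_μ)(∂F/∂x^μ)`. -/
noncomputable def poisson {n : ℕ} (F G : ((Fin n ⊕ Fin n) → ℝ) → ℝ)
    (z : (Fin n ⊕ Fin n) → ℝ) : ℝ :=
  ∑ μ, (pd F (Sum.inr μ) z * pd G (Sum.inl μ) z
    - pd G (Sum.inr μ) z * pd F (Sum.inl μ) z)


section lemmas
variable {ι : Type*} [Fintype ι] [DecidableEq ι] {f g : (ι → ℝ) → ℝ} {x : ι → ℝ} {μ : ι}

lemma pd_eval (i : ι) : pd (fun z => z i) μ x = if i = μ then 1 else 0 := by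
  have h : (fun z : ι → ℝ => z i) = (ContinuousLinearMap.proj i : (ι → ℝ) →L[ℝ] ℝ) := rfl
  rw [pd, h, ContinuousLinearMap.fderiv]
  simp [Pi.single_apply]

lemma pd_mul (hf : DifferentiableAt ℝ f x) (hg : DifferentiableAt ℝ g x) :
    pd (fun y => f y * g y) μ x = pd f μ x * g x + f x * pd g μ x := by
  rw [pd, fderiv_fun_mul hf hg]
  simp [pd]; ring

lemma pd_sum {κ : Type*} (s : Finset κ) (f : κ → (ι → ℝ) → ℝ)
    (h : ∀ i ∈ s, DifferentiableAt ℝ (f i) x) :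
    pd (fun y => ∑ i ∈ s, f i y) μ x = ∑ i ∈ s, pd (f i) μ x := by
  rw [pd, fderiv_fun_sum h]
  simp [pd]

lemma pd_comp2 (G : ℝ → ℝ → ℝ)
    (hG : Differentiable ℝ (fun q : ℝ × ℝ => G q.1 q.2))
    {A B : (ι → ℝ) → ℝ} (hA : DifferentiableAt ℝ A x) (hB : DifferentiableAt ℝ B x) :
    pd (fun y => G (A y) (B y)) μ x =
      fderiv ℝ (fun q : ℝ × ℝ => G q.1 q.2) (A x, B x) (1, 0) * pd A μ x
      + fderiv ℝ (fun q : ℝ × ℝ => G q.1 q.2) (A x, B x) (0, 1) * pd B μ x := by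
  have hcomp : HasFDerivAt (fun y => G (A y) (B y))
      ((fderiv ℝ (fun q : ℝ × ℝ => G q.1 q.2) (A x, B x)).comp
        ((fderiv ℝ A x).prod (fderiv ℝ B x))) x :=
    by have := (hG (A x, B x)).hasFDerivAt.comp x (hA.hasFDerivAt.prodMk hB.hasFDerivAt); exact this
  rw [pd, hcomp.fderiv]
  have h1 : ((fderiv ℝ A x).prod (fderiv ℝ B x)) (Pi.single μ 1)
      = (pd A μ x, pd B μ x) := rfl
  rw [ContinuousLinearMap.comp_apply, h1]
  have h2 : (pd A μ x, pd B μ x)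
      = pd A μ x • ((1:ℝ), (0:ℝ)) + pd B μ x • ((0:ℝ), (1:ℝ)) := by
    simp [Prod.ext_iff]
  rw [h2, map_add, map_smul, map_smul, smul_eq_mul, smul_eq_mul]; ring

end lemmas

lemma sum_rev {M : Type*} [AddCommMonoid M] {κ : Type*} [Fintype κ] (F : κ → κ → κ → M) :
    ∑ a, ∑ b, ∑ c, F a b c = ∑ c, ∑ b, ∑ a, F a b c := by
  calc ∑ a, ∑ b, ∑ c, F a b c = ∑ a, ∑ c, ∑ b, F a b c :=
        Finset.sum_congr rfl fun _ _ => Finset.sum_comm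
    _ = ∑ c, ∑ a, ∑ b, F a b c := Finset.sum_comm
    _ = ∑ c, ∑ b, ∑ a, F a b c := Finset.sum_congr rfl fun _ _ => Finset.sum_comm

lemma dsum_helper {κ : Type*} [Fintype κ] (F G H : κ → κ → ℝ)
    (h : ∀ a b, F a b - G a b - H a b = 0) :
    (∑ a, ∑ b, F a b) - ((∑ a, ∑ b, G a b) + (∑ a, ∑ b, H a b)) = 0 := by
  rw [← Finset.sum_add_distrib, ← Finset.sum_sub_distrib]
  apply Finset.sum_eq_zero; intro a _
  rw [← Finset.sum_add_distrib, ← Finset.sum_sub_distrib]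
  apply Finset.sum_eq_zero; intro b _
  have := h a b; linarith

lemma main_alg {κ : Type*} [Fintype κ] (d1 d2 : ℝ) (A1 A2 B1 B2 C S : κ → ℝ)
    (hA : (∑ μ, A1 μ * C μ) - (∑ μ, A2 μ * S μ) = 0)
    (hB : (∑ μ, B1 μ * C μ) - (∑ μ, B2 μ * S μ) = 0) :
    (∑ μ, (d1 * A1 μ + d2 * B1 μ) * C μ)
      + (∑ μ, (d1 * A2 μ + d2 * B2 μ) * (-S μ)) = 0 := by
  have h1 : ∑ μ, (d1 * A1 μ + d2 * B1 μ) * C μ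
      = d1 * ∑ μ, A1 μ * C μ + d2 * ∑ μ, B1 μ * C μ := by
    rw [Finset.mul_sum, Finset.mul_sum, ← Finset.sum_add_distrib]
    exact Finset.sum_congr rfl fun μ _ => by ring
  have h2 : ∑ μ, (d1 * A2 μ + d2 * B2 μ) * (-S μ)
      = -(d1 * ∑ μ, A2 μ * S μ + d2 * ∑ μ, B2 μ * S μ) := by
    rw [Finset.mul_sum, Finset.mul_sum, ← Finset.sum_add_distrib, ← Finset.sum_neg_distrib]
    exact Finset.sum_congr rfl fun μ _ => by ring
  rw [h1, h2]
  linear_combination d1 * hA + d2 * hB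

section base
variable {n : ℕ}

noncomputable def baseMap (n : ℕ) : ((Fin n ⊕ Fin n) → ℝ) →L[ℝ] (Fin n → ℝ) :=
  ContinuousLinearMap.pi (fun μ => ContinuousLinearMap.proj (Sum.inl μ))

lemma baseOf_eq (z : (Fin n ⊕ Fin n) → ℝ) : baseOf z = baseMap n z := rfl

lemma baseMap_single_inl (μ : Fin n) : baseMap n (Pi.single (Sum.inl μ) 1) = Pi.single μ 1 := by
  funext ν
  simp [baseMap, Pi.single_apply]

lemma baseMap_single_inr (μ : Fin n) : baseMap n (Pi.single (Sum.inr μ) 1) = 0 := by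
  funext ν
  simp [baseMap, Pi.single_apply]

lemma pd_comp_base_inl (f : (Fin n → ℝ) → ℝ) {z : (Fin n ⊕ Fin n) → ℝ}
    (hf : DifferentiableAt ℝ f (baseOf z)) (μ : Fin n) :
    pd (fun w => f (baseOf w)) (Sum.inl μ) z = pd f μ (baseOf z) := by
  have h : fderiv ℝ (fun w => f (baseOf w)) z
      = (fderiv ℝ f (baseOf z)).comp (baseMap n) :=
    (hf.hasFDerivAt.comp z (baseMap n).hasFDerivAt).fderiv
  rw [pd, h]
  simp [pd, baseMap_single_inl, baseOf_eq]

lemma pd_comp_base_inr (f : (Fin n → ℝ) → ℝ) {z : (Fin n ⊕ Fin n) → ℝ}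
    (hf : DifferentiableAt ℝ f (baseOf z)) (μ : Fin n) :
    pd (fun w => f (baseOf w)) (Sum.inr μ) z = 0 := by
  have h : fderiv ℝ (fun w => f (baseOf w)) z
      = (fderiv ℝ f (baseOf z)).comp (baseMap n) :=
    (hf.hasFDerivAt.comp z (baseMap n).hasFDerivAt).fderiv
  rw [pd, h]
  simp [baseMap_single_inr]

lemma diff_base (f : (Fin n → ℝ) → ℝ) (hf : Differentiable ℝ f) :
    Differentiable ℝ (fun w : (Fin n ⊕ Fin n) → ℝ => f (baseOf w)) :=
  hf.comp (baseMap n).differentiable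

lemma diff_eval (i : Fin n ⊕ Fin n) :
    Differentiable ℝ (fun w : (Fin n ⊕ Fin n) → ℝ => w i) :=
  (ContinuousLinearMap.proj i : ((Fin n ⊕ Fin n) → ℝ) →L[ℝ] ℝ).differentiable

lemma pd_lin1_inl (f : (Fin n → ℝ) → Fin n → ℝ)
    (hf : ∀ α, Differentiable ℝ (fun x => f x α)) (z : (Fin n ⊕ Fin n) → ℝ) (μ : Fin n) :
    pd (fun w => ∑ α, f (baseOf w) α * w (Sum.inr α)) (Sum.inl μ) z
      = ∑ α, pd (fun y => f y α) μ (baseOf z) * z (Sum.inr α) := by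
  rw [pd_sum Finset.univ (fun α w => f (baseOf w) α * w (Sum.inr α))
    (fun i _ => ((diff_base _ (hf i)).mul (diff_eval (Sum.inr i))) z)]
  refine Finset.sum_congr rfl fun α _ => ?_
  rw [pd_mul ((diff_base _ (hf α)) z) (diff_eval (Sum.inr α) z),
    pd_comp_base_inl _ ((hf α) _) μ, pd_eval]
  simp

lemma pd_lin1_inr (f : (Fin n → ℝ) → Fin n → ℝ)
    (hf : ∀ α, Differentiable ℝ (fun x => f x α)) (z : (Fin n ⊕ Fin n) → ℝ) (μ : Fin n) :
    pd (fun w => ∑ α, f (baseOf w) α * w (Sum.inr α)) (Sum.inr μ) z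
      = f (baseOf z) μ := by
  rw [pd_sum Finset.univ (fun α w => f (baseOf w) α * w (Sum.inr α))
    (fun i _ => ((diff_base _ (hf i)).mul (diff_eval (Sum.inr i))) z)]
  calc ∑ α, pd (fun w => f (baseOf w) α * w (Sum.inr α)) (Sum.inr μ) z
      = ∑ α, (if α = μ then f (baseOf z) α else 0) := by
        refine Finset.sum_congr rfl fun α _ => ?_
        rw [pd_mul ((diff_base _ (hf α)) z) (diff_eval (Sum.inr α) z),
          pd_comp_base_inr _ ((hf α) _) μ, pd_eval]
        by_cases h : α = μ <;> simp [h]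
    _ = f (baseOf z) μ := by simp

lemma pd_lin2_inl (f : (Fin n → ℝ) → Fin n → ℝ)
    (hf : ∀ α, Differentiable ℝ (fun x => f x α)) (z : (Fin n ⊕ Fin n) → ℝ) (μ : Fin n) :
    pd (fun w => ∑ α, w (Sum.inr α) * f (baseOf w) α) (Sum.inl μ) z
      = ∑ α, z (Sum.inr α) * pd (fun y => f y α) μ (baseOf z) := by
  rw [pd_sum Finset.univ (fun α w => w (Sum.inr α) * f (baseOf w) α)
    (fun i _ => ((diff_eval (Sum.inr i)).mul (diff_base _ (hf i))) z)]
  refine Finset.sum_congr rfl fun α _ => ?_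
  rw [pd_mul (diff_eval (Sum.inr α) z) ((diff_base _ (hf α)) z),
    pd_comp_base_inl _ ((hf α) _) μ, pd_eval]
  simp

lemma pd_lin2_inr (f : (Fin n → ℝ) → Fin n → ℝ)
    (hf : ∀ α, Differentiable ℝ (fun x => f x α)) (z : (Fin n ⊕ Fin n) → ℝ) (μ : Fin n) :
    pd (fun w => ∑ α, w (Sum.inr α) * f (baseOf w) α) (Sum.inr μ) z
      = f (baseOf z) μ := by
  rw [pd_sum Finset.univ (fun α w => w (Sum.inr α) * f (baseOf w) α)
    (fun i _ => ((diff_eval (Sum.inr i)).mul (diff_base _ (hf i))) z)]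
  calc ∑ α, pd (fun w => w (Sum.inr α) * f (baseOf w) α) (Sum.inr μ) z
      = ∑ α, (if α = μ then f (baseOf z) α else 0) := by
        refine Finset.sum_congr rfl fun α _ => ?_
        rw [pd_mul (diff_eval (Sum.inr α) z) ((diff_base _ (hf α)) z),
          pd_comp_base_inr _ ((hf α) _) μ, pd_eval]
        by_cases h : α = μ <;> simp [h]
    _ = f (baseOf z) μ := by simp

lemma pd_quad_inl (h : (Fin n → ℝ) → Fin n → Fin n → ℝ)
    (hh : ∀ a b, Differentiable ℝ (fun x => h x a b)) (z : (Fin n ⊕ Fin n) → ℝ) (μ : Fin n) :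
    pd (fun w => ∑ a, ∑ b, w (Sum.inr a) * h (baseOf w) a b * w (Sum.inr b)) (Sum.inl μ) z
      = ∑ a, ∑ b, z (Sum.inr a) * pd (fun y => h y a b) μ (baseOf z) * z (Sum.inr b) := by
  rw [pd_sum Finset.univ (fun a w => ∑ b, w (Sum.inr a) * h (baseOf w) a b * w (Sum.inr b))
    (fun a _ => Differentiable.fun_sum
    (fun b _ => (((diff_eval (Sum.inr a)).mul (diff_base _ (hh a b))).mul
      (diff_eval (Sum.inr b))) ) z)]
  refine Finset.sum_congr rfl fun a _ => ?_
  rw [pd_sum Finset.univ (fun b w => w (Sum.inr a) * h (baseOf w) a b * w (Sum.inr b))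
    (fun b _ => (((diff_eval (Sum.inr a)).mul
    (diff_base _ (hh a b))).mul (diff_eval (Sum.inr b))) z)]
  refine Finset.sum_congr rfl fun b _ => ?_
  rw [pd_mul (((diff_eval (Sum.inr a)).fun_mul (diff_base _ (hh a b))) z)
      (diff_eval (Sum.inr b) z),
    pd_mul (diff_eval (Sum.inr a) z) ((diff_base _ (hh a b)) z),
    pd_comp_base_inl _ ((hh a b) _) μ, pd_eval, pd_eval]
  simp

lemma pd_quad_inr (h : (Fin n → ℝ) → Fin n → Fin n → ℝ)
    (hh : ∀ a b, Differentiable ℝ (fun x => h x a b)) (z : (Fin n ⊕ Fin n) → ℝ) (μ : Fin n) :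
    pd (fun w => ∑ a, ∑ b, w (Sum.inr a) * h (baseOf w) a b * w (Sum.inr b)) (Sum.inr μ) z
      = (∑ b, h (baseOf z) μ b * z (Sum.inr b)) + ∑ a, z (Sum.inr a) * h (baseOf z) a μ := by
  rw [pd_sum Finset.univ (fun a w => ∑ b, w (Sum.inr a) * h (baseOf w) a b * w (Sum.inr b))
    (fun a _ => Differentiable.fun_sum
    (fun b _ => (((diff_eval (Sum.inr a)).mul (diff_base _ (hh a b))).mul
      (diff_eval (Sum.inr b))) ) z)]
  have key : ∀ a, pd (fun w => ∑ b, w (Sum.inr a) * h (baseOf w) a b * w (Sum.inr b))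
      (Sum.inr μ) z
      = ∑ b, ((if a = μ then h (baseOf z) a b * z (Sum.inr b) else 0)
        + (if b = μ then z (Sum.inr a) * h (baseOf z) a b else 0)) := by
    intro a
    rw [pd_sum Finset.univ (fun b w => w (Sum.inr a) * h (baseOf w) a b * w (Sum.inr b))
    (fun b _ => (((diff_eval (Sum.inr a)).mul
      (diff_base _ (hh a b))).mul (diff_eval (Sum.inr b))) z)]
    refine Finset.sum_congr rfl fun b _ => ?_
    rw [pd_mul (((diff_eval (Sum.inr a)).fun_mul (diff_base _ (hh a b))) z)
        (diff_eval (Sum.inr b) z),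
      pd_mul (diff_eval (Sum.inr a) z) ((diff_base _ (hh a b)) z),
      pd_comp_base_inr _ ((hh a b) _) μ, pd_eval, pd_eval]
    by_cases ha : a = μ <;> by_cases hb : b = μ <;> simp [ha, hb]
  simp only [key, Finset.sum_add_distrib]
  congr 1
  · rw [Finset.sum_comm]
    simp
  · simp

end base

/-- Let `ξ` be an Aristotelian Killing vector (`L_ξ ν = 0`,
`L_ξ h̃ = 0`) and `H_f(x,p) = G(ν^μ p_μ, p_μ h̃^{μν} p_ν)` a free Hamiltonian.
Then `dH_f(ξ̂) = 0` (i.e. `ξ̂` is tangent to every level set of `H_f`)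
and the Poisson bracket `{H_f, p_μ ξ^μ}` vanishes. -/
theorem lift_tangent_free_hamiltonian {n : ℕ}
    (ξ nu : (Fin n → ℝ) → Fin n → ℝ)
    (ht : (Fin n → ℝ) → Fin n → Fin n → ℝ)
    (G : ℝ → ℝ → ℝ)
    (hξ : ∀ μ, ContDiff ℝ (⊤ : ℕ∞) (fun x => ξ x μ))
    (hnu : ∀ μ, ContDiff ℝ (⊤ : ℕ∞) (fun x => nu x μ))
    (hht : ∀ μ ν, ContDiff ℝ (⊤ : ℕ∞) (fun x => ht x μ ν))
    (hG : ContDiff ℝ (⊤ : ℕ∞) (fun q : ℝ × ℝ => G q.1 q.2))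
    -- Killing conditions: (L_ξ ν)^μ = 0 and (L_ξ h̃)^{μν} = 0
    (hKnu : ∀ x i, (∑ l, ξ x l * pd (fun y => nu y i) l x)
      - (∑ l, nu x l * pd (fun y => ξ y i) l x) = 0)
    (hKht : ∀ x a b, (∑ l, ξ x l * pd (fun y => ht y a b) l x)
      - (∑ l, ht x l b * pd (fun y => ξ y a) l x)
      - (∑ l, ht x a l * pd (fun y => ξ y b) l x) = 0)
    (Hf : ((Fin n ⊕ Fin n) → ℝ) → ℝ)
    (hHf : ∀ z, Hf z = G (∑ μ, nu (baseOf z) μ * z (Sum.inr μ))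
      (∑ μ, ∑ ν, z (Sum.inr μ) * ht (baseOf z) μ ν * z (Sum.inr ν))) :
    (∀ z : (Fin n ⊕ Fin n) → ℝ, ∑ M, pd Hf M z * lift ξ z M = 0) ∧
    (∀ z : (Fin n ⊕ Fin n) → ℝ,
      poisson Hf (fun w => ∑ μ, w (Sum.inr μ) * ξ (baseOf w) μ) z = 0) := by
  have hξd : ∀ μ, Differentiable ℝ (fun x => ξ x μ) := fun μ => (hξ μ).differentiable (by simp)
  have hnud : ∀ μ, Differentiable ℝ (fun x => nu x μ) := fun μ => (hnu μ).differentiable (by simp)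
  have hhtd : ∀ a b, Differentiable ℝ (fun x => ht x a b) :=
    fun a b => (hht a b).differentiable (by simp)
  have hGd : Differentiable ℝ (fun q : ℝ × ℝ => G q.1 q.2) := hG.differentiable (by simp)
  have dA : Differentiable ℝ
      (fun w : (Fin n ⊕ Fin n) → ℝ => ∑ α, nu (baseOf w) α * w (Sum.inr α)) :=
    Differentiable.fun_sum fun i _ => (diff_base _ (hnud i)).mul (diff_eval (Sum.inr i))
  have dB : Differentiable ℝ (fun w : (Fin n ⊕ Fin n) → ℝ =>
      ∑ a, ∑ b, w (Sum.inr a) * ht (baseOf w) a b * w (Sum.inr b)) :=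
    Differentiable.fun_sum fun a _ => Differentiable.fun_sum fun b _ =>
      ((diff_eval (Sum.inr a)).mul (diff_base _ (hhtd a b))).mul (diff_eval (Sum.inr b))
  have hHfun : Hf = fun w => G (∑ α, nu (baseOf w) α * w (Sum.inr α))
      (∑ a, ∑ b, w (Sum.inr a) * ht (baseOf w) a b * w (Sum.inr b)) := funext hHf
  subst hHfun
  -- the two partial-derivative coefficients of G
  set q1 : ((Fin n ⊕ Fin n) → ℝ) → ℝ := fun z =>
    fderiv ℝ (fun q : ℝ × ℝ => G q.1 q.2)
      (∑ α, nu (baseOf z) α * z (Sum.inr α),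
       ∑ a, ∑ b, z (Sum.inr a) * ht (baseOf z) a b * z (Sum.inr b)) (1, 0) with hq1
  set q2 : ((Fin n ⊕ Fin n) → ℝ) → ℝ := fun z =>
    fderiv ℝ (fun q : ℝ × ℝ => G q.1 q.2)
      (∑ α, nu (baseOf z) α * z (Sum.inr α),
       ∑ a, ∑ b, z (Sum.inr a) * ht (baseOf z) a b * z (Sum.inr b)) (0, 1) with hq2
  have pdHfM : ∀ (z : (Fin n ⊕ Fin n) → ℝ) (M : Fin n ⊕ Fin n),
      pd (fun w => G (∑ α, nu (baseOf w) α * w (Sum.inr α))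
        (∑ a, ∑ b, w (Sum.inr a) * ht (baseOf w) a b * w (Sum.inr b))) M z
      = q1 z * pd (fun w => ∑ α, nu (baseOf w) α * w (Sum.inr α)) M z
        + q2 z * pd (fun w => ∑ a, ∑ b, w (Sum.inr a) * ht (baseOf w) a b * w (Sum.inr b)) M z :=
    fun z M => pd_comp2 G hGd (dA z) (dB z)
  have claim1 : ∀ z : (Fin n ⊕ Fin n) → ℝ,
      ∑ M, pd (fun w => G (∑ α, nu (baseOf w) α * w (Sum.inr α))
        (∑ a, ∑ b, w (Sum.inr a) * ht (baseOf w) a b * w (Sum.inr b))) M z * lift ξ z M = 0 := by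
    intro z
    set x := baseOf z with hx
    set p : Fin n → ℝ := fun α => z (Sum.inr α) with hp
    have KA : (∑ μ, (∑ α, pd (fun y => nu y α) μ x * p α) * ξ x μ)
        - (∑ μ, nu x μ * (∑ α, p α * pd (fun y => ξ y α) μ x)) = 0 := by
      have h1 : (∑ μ, (∑ α, pd (fun y => nu y α) μ x * p α) * ξ x μ)
          = ∑ α, p α * ∑ l, ξ x l * pd (fun y => nu y α) l x := by
        calc ∑ μ, (∑ α, pd (fun y => nu y α) μ x * p α) * ξ x μ
            = ∑ μ, ∑ α, pd (fun y => nu y α) μ x * p α * ξ x μ :=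
              Finset.sum_congr rfl fun μ _ => Finset.sum_mul _ _ _
          _ = ∑ α, ∑ μ, pd (fun y => nu y α) μ x * p α * ξ x μ := Finset.sum_comm
          _ = ∑ α, p α * ∑ l, ξ x l * pd (fun y => nu y α) l x := by
              refine Finset.sum_congr rfl fun α _ => ?_
              rw [Finset.mul_sum]
              exact Finset.sum_congr rfl fun l _ => by ring
      have h2 : (∑ μ, nu x μ * (∑ α, p α * pd (fun y => ξ y α) μ x))
          = ∑ α, p α * ∑ l, nu x l * pd (fun y => ξ y α) l x := by
        calc ∑ μ, nu x μ * (∑ α, p α * pd (fun y => ξ y α) μ x)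
            = ∑ μ, ∑ α, nu x μ * (p α * pd (fun y => ξ y α) μ x) :=
              Finset.sum_congr rfl fun μ _ => Finset.mul_sum _ _ _
          _ = ∑ α, ∑ μ, nu x μ * (p α * pd (fun y => ξ y α) μ x) := Finset.sum_comm
          _ = ∑ α, p α * ∑ l, nu x l * pd (fun y => ξ y α) l x := by
              refine Finset.sum_congr rfl fun α _ => ?_
              rw [Finset.mul_sum]
              exact Finset.sum_congr rfl fun l _ => by ring
      rw [h1, h2, ← Finset.sum_sub_distrib]
      apply Finset.sum_eq_zero
      intro α _
      rw [← mul_sub, hKnu x α, mul_zero]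
    have KB : (∑ μ, (∑ a, ∑ b, p a * pd (fun y => ht y a b) μ x * p b) * ξ x μ)
        - (∑ μ, ((∑ b, ht x μ b * p b) + ∑ a, p a * ht x a μ)
            * (∑ α, p α * pd (fun y => ξ y α) μ x)) = 0 := by
      have hS2 : (∑ μ, (∑ a, ∑ b, p a * pd (fun y => ht y a b) μ x * p b) * ξ x μ)
          = ∑ a, ∑ b, p a * p b * (∑ l, ξ x l * pd (fun y => ht y a b) l x) := by
        calc ∑ μ, (∑ a, ∑ b, p a * pd (fun y => ht y a b) μ x * p b) * ξ x μ
            = ∑ μ, ∑ a, ∑ b, p a * pd (fun y => ht y a b) μ x * p b * ξ x μ := by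
              refine Finset.sum_congr rfl fun μ _ => ?_
              rw [Finset.sum_mul]
              exact Finset.sum_congr rfl fun a _ => Finset.sum_mul _ _ _
          _ = ∑ b, ∑ a, ∑ μ, p a * pd (fun y => ht y a b) μ x * p b * ξ x μ := sum_rev _
          _ = ∑ a, ∑ b, ∑ μ, p a * pd (fun y => ht y a b) μ x * p b * ξ x μ :=
              Finset.sum_comm
          _ = ∑ a, ∑ b, p a * p b * (∑ l, ξ x l * pd (fun y => ht y a b) l x) := by
              refine Finset.sum_congr rfl fun a _ => Finset.sum_congr rfl fun b _ => ?_
              rw [Finset.mul_sum]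
              exact Finset.sum_congr rfl fun l _ => by ring
      have hSB2a : (∑ μ, (∑ b, ht x μ b * p b) * (∑ α, p α * pd (fun y => ξ y α) μ x))
          = ∑ a, ∑ b, p a * p b * (∑ l, ht x l b * pd (fun y => ξ y a) l x) := by
        calc ∑ μ, (∑ b, ht x μ b * p b) * (∑ α, p α * pd (fun y => ξ y α) μ x)
            = ∑ μ, ∑ b, ∑ α, ht x μ b * p b * (p α * pd (fun y => ξ y α) μ x) := by
              refine Finset.sum_congr rfl fun μ _ => ?_
              rw [Finset.sum_mul]
              exact Finset.sum_congr rfl fun b _ => Finset.mul_sum _ _ _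
          _ = ∑ α, ∑ b, ∑ μ, ht x μ b * p b * (p α * pd (fun y => ξ y α) μ x) := sum_rev _
          _ = ∑ a, ∑ b, p a * p b * (∑ l, ht x l b * pd (fun y => ξ y a) l x) := by
              refine Finset.sum_congr rfl fun a _ => Finset.sum_congr rfl fun b _ => ?_
              rw [Finset.mul_sum]
              exact Finset.sum_congr rfl fun l _ => by ring
      have hSB2b : (∑ μ, (∑ a, p a * ht x a μ) * (∑ α, p α * pd (fun y => ξ y α) μ x))
          = ∑ a, ∑ b, p a * p b * (∑ l, ht x a l * pd (fun y => ξ y b) l x) := by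
        calc ∑ μ, (∑ a, p a * ht x a μ) * (∑ α, p α * pd (fun y => ξ y α) μ x)
            = ∑ μ, ∑ a, ∑ α, p a * ht x a μ * (p α * pd (fun y => ξ y α) μ x) := by
              refine Finset.sum_congr rfl fun μ _ => ?_
              rw [Finset.sum_mul]
              exact Finset.sum_congr rfl fun a _ => Finset.mul_sum _ _ _
          _ = ∑ α, ∑ a, ∑ μ, p a * ht x a μ * (p α * pd (fun y => ξ y α) μ x) := sum_rev _
          _ = ∑ a, ∑ α, ∑ μ, p a * ht x a μ * (p α * pd (fun y => ξ y α) μ x) :=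
              Finset.sum_comm
          _ = ∑ a, ∑ b, p a * p b * (∑ l, ht x a l * pd (fun y => ξ y b) l x) := by
              refine Finset.sum_congr rfl fun a _ => Finset.sum_congr rfl fun b _ => ?_
              rw [Finset.mul_sum]
              exact Finset.sum_congr rfl fun l _ => by ring
      have hsplit : (∑ μ, ((∑ b, ht x μ b * p b) + ∑ a, p a * ht x a μ)
            * (∑ α, p α * pd (fun y => ξ y α) μ x))
          = (∑ μ, (∑ b, ht x μ b * p b) * (∑ α, p α * pd (fun y => ξ y α) μ x))
            + (∑ μ, (∑ a, p a * ht x a μ) * (∑ α, p α * pd (fun y => ξ y α) μ x)) := by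
        rw [← Finset.sum_add_distrib]
        exact Finset.sum_congr rfl fun μ _ => add_mul _ _ _
      rw [hS2, hsplit, hSB2a, hSB2b]
      exact dsum_helper _ _ _ fun a b => by
        linear_combination (p a * p b) * hKht x a b
    -- now assemble
    rw [Fintype.sum_sum_type]
    have lift_inl : ∀ μ : Fin n, lift ξ z (Sum.inl μ) = ξ x μ := fun μ => rfl
    have lift_inr : ∀ μ : Fin n, lift ξ z (Sum.inr μ)
        = -∑ α, p α * pd (fun y => ξ y α) μ x := fun μ => rfl
    simp only [pdHfM, lift_inl, lift_inr, pd_lin1_inl nu hnud z, pd_lin1_inr nu hnud z,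
      pd_quad_inl ht hhtd z, pd_quad_inr ht hhtd z]
    exact main_alg (q1 z) (q2 z)
      (fun μ => ∑ α, pd (fun y => nu y α) μ x * p α)
      (fun μ => nu x μ)
      (fun μ => ∑ a, ∑ b, p a * pd (fun y => ht y a b) μ x * p b)
      (fun μ => (∑ b, ht x μ b * p b) + ∑ a, p a * ht x a μ)
      (fun μ => ξ x μ)
      (fun μ => ∑ α, p α * pd (fun y => ξ y α) μ x) KA KB
  refine ⟨claim1, fun z => ?_⟩
  have h1 := claim1 z
  rw [Fintype.sum_sum_type] at h1
  have lift_inl : ∀ μ : Fin n, lift ξ z (Sum.inl μ) = ξ (baseOf z) μ := fun μ => rfl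
  have lift_inr : ∀ μ : Fin n, lift ξ z (Sum.inr μ)
      = -∑ α, z (Sum.inr α) * pd (fun y => ξ y α) μ (baseOf z) := fun μ => rfl
  simp only [lift_inl, lift_inr, mul_neg] at h1
  rw [Finset.sum_neg_distrib] at h1
  rw [poisson]
  simp only [pd_lin2_inl ξ hξd z, pd_lin2_inr ξ hξd z]
  rw [Finset.sum_sub_distrib]
  rw [show (∑ μ, ξ (baseOf z) μ * pd (fun w => G (∑ α, nu (baseOf w) α * w (Sum.inr α))
      (∑ a, ∑ b, w (Sum.inr a) * ht (baseOf w) a b * w (Sum.inr b))) (Sum.inl μ) z)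
    = ∑ μ, pd (fun w => G (∑ α, nu (baseOf w) α * w (Sum.inr α))
      (∑ a, ∑ b, w (Sum.inr a) * ht (baseOf w) a b * w (Sum.inr b))) (Sum.inl μ) z
        * ξ (baseOf z) μ from Finset.sum_congr rfl fun μ _ => mul_comm _ _]
  linarith [h1]
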